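/- arXiv:1707.06864 — 3 statements merged into one kernel-verified Lean document; each statement's English description precedes it below -/
import Mathlib

section
/- The maximal length of an element of G(e,e,n) over the generating set X = {t_0, ..., t_{e-1}, s_3, ..., s_n} equals n(n-1). -/
open Matrix Complex
open scoped Classical

/-- `ζ_e = exp(2πi/e)`. -/
noncomputable def zeta (e : ℕ) : ℂ := Complex.exp (2 * Real.pi * Complex.I / e)

/-- The generator `t_i` of `G(e,e,n)`: the monomial matrix with upper-left `2×2` block
`[[0, ζ_e^{-i}],[ζ_e^i, 0]]` and identity elsewhere. -/
noncomputable def tmat (e n : ℕ) (i : ℤ) : Matrix (Fin n) (Fin n) ℂ :=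
  Matrix.of fun a b =>
    if (a : ℕ) = 0 ∧ (b : ℕ) = 1 then zeta e ^ (-i)
    else if (a : ℕ) = 1 ∧ (b : ℕ) = 0 then zeta e ^ i
    else if a = b ∧ 2 ≤ (a : ℕ) then 1 else 0

/-- The generator `s_j` of `G(e,e,n)`: the permutation matrix of the transposition
exchanging coordinates `j-1` and `j` (1-indexed), i.e. indices `j-2` and `j-1` (0-indexed). -/
def smat (n : ℕ) (j : ℕ) : Matrix (Fin n) (Fin n) ℂ :=
  Matrix.of fun a b =>
    if (a : ℕ) = j - 2 ∧ (b : ℕ) = j - 1 then 1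
    else if (a : ℕ) = j - 1 ∧ (b : ℕ) = j - 2 then 1
    else if a = b ∧ (a : ℕ) ≠ j - 2 ∧ (a : ℕ) ≠ j - 1 then 1 else 0

/-- The generating set `X = {t_0, …, t_{e-1}, s_3, …, s_n}` of `G(e,e,n)`. -/
noncomputable def Xset (e n : ℕ) : Set (Matrix (Fin n) (Fin n) ℂ) :=
  {w | (∃ i : ℕ, i < e ∧ w = tmat e n i) ∨ (∃ j : ℕ, 3 ≤ j ∧ j ≤ n ∧ w = smat n j)}

/-- Membership in `G(e,e,n)`: `w` is monomial, its nonzero entries are `e`-th roots of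
unity, and the product of its nonzero entries is `1`. -/
def IsGeen (e n : ℕ) (w : Matrix (Fin n) (Fin n) ℂ) : Prop :=
  (∀ i, ∃! j, w i j ≠ 0) ∧ (∀ j, ∃! i, w i j ≠ 0) ∧
  (∀ i j, w i j ≠ 0 → w i j ^ e = 1) ∧
  (∏ i, ∏ j, (if w i j ≠ 0 then w i j else 1)) = 1

/-- The length `ℓ(w)` of `w` over the generating set `X` (all generators are
involutions, so positive words suffice). -/
noncomputable def len (e n : ℕ) (w : Matrix (Fin n) (Fin n) ℂ) : ℕ :=
  sInf {r | ∃ l : List (Matrix (Fin n) (Fin n) ℂ),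
    (∀ x ∈ l, x ∈ Xset e n) ∧ l.length = r ∧ l.prod = w}

/-- Left divisibility: `w' ≼ w` iff `w = w' w''` with `w'' ∈ G(e,e,n)` and
`ℓ(w) = ℓ(w') + ℓ(w'')`. -/
noncomputable def ldvd (e n : ℕ) (w' w : Matrix (Fin n) (Fin n) ℂ) : Prop :=
  ∃ w'', IsGeen e n w'' ∧ w = w' * w'' ∧ len e n w = len e n w' + len e n w''

/-- Right divisibility: `w' ≼_r w` iff `w = w'' w'` with `w'' ∈ G(e,e,n)` and
`ℓ(w) = ℓ(w'') + ℓ(w')`. -/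
noncomputable def rdvd (e n : ℕ) (w' w : Matrix (Fin n) (Fin n) ℂ) : Prop :=
  ∃ w'', IsGeen e n w'' ∧ w = w'' * w' ∧ len e n w = len e n w'' + len e n w'

/-- The element `λ = diag(ζ_e^{-(n-1)}, ζ_e, …, ζ_e)`. -/
noncomputable def lam (e n : ℕ) : Matrix (Fin n) (Fin n) ℂ :=
  Matrix.diagonal (fun i => if (i : ℕ) = 0 then zeta e ^ (-(n - 1 : ℤ)) else zeta e)

/-!
Encode an element of `G(e,e,n)` as a permutation `σ` together with charges `c : Fin n → ZMod e`
summing to `0` (`ChargedPerm`): there are `n` tokens, token `y` sits at position `σ⁻¹ y` and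
carries the charge `c y`. Right multiplication by a generator swaps the tokens at two adjacent
positions; `t_k` moreover adds `-k` and `k` to the charges of the tokens at positions `0` and `1`.

Upper bound: in the parabolic subgroup moving only the first `m` positions, at most `2(m-1)`
generators bring token `m-1` home with charge `0` (move it to position `1`, let one `t_k` carry it
across the first two positions while discharging it, move it to position `m-1`), which lands in
the parabolic subgroup on `m-1` positions. Summing, every element has length at most `n(n-1)`.

Lower bound: in `λ` every token `y ≠ 0` ends with charge `1 ≠ 0`, so along any word for `λ` it
visits position `0`. Hence every ordered pair `x ≠ y` is inverted at some step: if `x < y`, before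
`y` reaches position `0`; if `y < x`, between `x` reaching position `0` and the end. An adjacent
transposition inverts a single ordered pair, so the word has at least `n(n-1)` letters.
-/

lemma AddChar.map_finsetSum {ι A M : Type*} [AddCommMonoid A] [CommMonoid M] (ψ : AddChar A M)
    (s : Finset ι) (f : ι → A) : ψ (∑ i ∈ s, f i) = ∏ i ∈ s, ψ (f i) := by
  induction s using Finset.cons_induction with
  | empty => simp
  | cons i s hi ih => rw [Finset.sum_cons, Finset.prod_cons, AddChar.map_add_eq_mul, ih]

lemma len_prod_le_length {e n : ℕ} {l : List (Matrix (Fin n) (Fin n) ℂ)}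
    (hl : ∀ x ∈ l, x ∈ Xset e n) : len e n l.prod ≤ l.length :=
  Nat.sInf_le ⟨l, hl, rfl, rfl⟩

lemma le_len_of_forall_word {e n k : ℕ} {w : Matrix (Fin n) (Fin n) ℂ}
    (hw : ∃ l : List _, (∀ x ∈ l, x ∈ Xset e n) ∧ l.prod = w)
    (h : ∀ l : List _, (∀ x ∈ l, x ∈ Xset e n) → l.prod = w → k ≤ l.length) : k ≤ len e n w := by
  obtain ⟨l, hl, hprod⟩ := Nat.sInf_mem (s := {r | ∃ l : List (Matrix (Fin n) (Fin n) ℂ),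
    (∀ x ∈ l, x ∈ Xset e n) ∧ l.length = r ∧ l.prod = w}) (by
      obtain ⟨l, hl, hprod⟩ := hw
      exact ⟨l.length, l, hl, rfl, hprod⟩)
  rw [len, ← hprod.1]
  exact h l hl hprod.2

open Equiv

def IsAdjSwapBelow {n : ℕ} (m : ℕ) (τ : Perm (Fin n)) : Prop :=
  ∃ i j : Fin n, j.val = i.val + 1 ∧ j.val < m ∧ τ = swap i j

lemma Nat.exists_le_lt_and_not_succ {P : ℕ → Prop} {a b : ℕ} (hab : a ≤ b) (ha : P a)
    (hb : ¬P b) : ∃ t, a ≤ t ∧ t < b ∧ P t ∧ ¬P (t + 1) := by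
  induction b, hab using Nat.le_induction with
  | base => exact absurd ha hb
  | succ b hab ih =>
    by_cases hPb : P b
    · exact ⟨b, hab, by omega, hPb, hb⟩
    · obtain ⟨t, hat, htb, hPt, hPt'⟩ := ih hPb
      exact ⟨t, hat, by omega, hPt, hPt'⟩

namespace Equiv.Perm

variable {n : ℕ}

lemma eq_and_eq_of_lt_of_swap_lt {i j u v : Fin n} (hij : j.val = i.val + 1) (huv : u < v)
    (hswap : swap i j v < swap i j u) : u = i ∧ v = j := by
  simp only [swap_apply_def, Fin.lt_def, Fin.ext_iff] at *
  split_ifs at hswap <;> omega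

lemma exists_inversion_of_forall_visit_zero {N : ℕ} (π : ℕ → Perm (Fin n)) (h0 : π 0 = 1)
    (hN : π N = 1) (hvisit : ∀ y, ∃ t ≤ N, (π t y).val = 0) {x y : Fin n} (hxy : x ≠ y) :
    ∃ t < N, π t x < π t y ∧ π (t + 1) y < π (t + 1) x := by
  have hne (t : ℕ) : π t x ≠ π t y := (π t).injective.ne hxy
  have hstep {a b : ℕ} (hab : a ≤ b) (hb : b ≤ N) (ha : π a x < π a y) (hb' : ¬π b x < π b y) :
      ∃ t < N, π t x < π t y ∧ π (t + 1) y < π (t + 1) x := by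
    obtain ⟨t, -, htb, hlt, hnlt⟩ :=
      Nat.exists_le_lt_and_not_succ (P := fun t => π t x < π t y) hab ha hb'
    exact ⟨t, by omega, hlt, lt_of_le_of_ne (not_lt.1 hnlt) (hne _).symm⟩
  rcases hxy.lt_or_gt with hlt | hgt
  · obtain ⟨s, hs, hys⟩ := hvisit y
    exact hstep (Nat.zero_le s) hs (by simpa [h0]) (by simp [Fin.lt_def, hys])
  · obtain ⟨s, hs, hxs⟩ := hvisit x
    exact hstep hs le_rfl (lt_of_le_of_ne (Fin.le_def.2 (by omega)) (hne s))
      (by simpa [hN] using hgt.le)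

theorem mul_sub_one_le_length_of_forall_visit_zero (τs : List (Perm (Fin n)))
    (hτs : ∀ τ ∈ τs, IsAdjSwapBelow n τ) (hprod : τs.prod = 1)
    (hvisit : ∀ y, ∃ t ≤ τs.length, ((τs.take t).prod⁻¹ y).val = 0) :
    n * (n - 1) ≤ τs.length := by
  set π : ℕ → Perm (Fin n) := fun t => (τs.take t).prod⁻¹
  set inversions : ℕ → Finset (Fin n × Fin n) := fun t =>
    {xy | π t xy.1 < π t xy.2 ∧ π (t + 1) xy.2 < π (t + 1) xy.1}
  have hcover : (Finset.univ : Finset (Fin n)).offDiag ⊆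
      (Finset.range τs.length).biUnion inversions := by
    rintro ⟨x, y⟩ hxy
    obtain ⟨t, ht, hinv⟩ := exists_inversion_of_forall_visit_zero π (by simp [π])
      (by simp [π, hprod]) hvisit (Finset.mem_offDiag.1 hxy).2.2
    exact Finset.mem_biUnion.2 ⟨t, Finset.mem_range.2 ht, by simpa [inversions] using hinv⟩
  have hcard (t : ℕ) (ht : t ∈ Finset.range τs.length) : (inversions t).card ≤ 1 := by
    rw [Finset.mem_range] at ht
    obtain ⟨i, j, hij, -, hτ⟩ := hτs _ (List.getElem_mem ht)
    suffices ∀ xy ∈ inversions t, xy = ((τs.take t).prod i, (τs.take t).prod j) from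
      Finset.card_le_one.2 fun a ha b hb => by rw [this a ha, this b hb]
    rintro ⟨x, y⟩ hxy
    simp only [inversions, π, Finset.mem_filter, List.prod_take_succ _ _ ht, hτ, _root_.mul_inv_rev,
      swap_inv, Perm.mul_apply, Finset.mem_univ, true_and] at hxy
    obtain ⟨hx, hy⟩ := eq_and_eq_of_lt_of_swap_lt hij hxy.1 hxy.2
    simp [← hx, ← hy]
  calc n * (n - 1) = (Finset.univ : Finset (Fin n)).offDiag.card := by
        simp [Finset.offDiag_card, Nat.mul_sub_one]
    _ ≤ ((Finset.range τs.length).biUnion inversions).card := Finset.card_le_card hcover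
    _ ≤ (Finset.range τs.length).card * 1 := Finset.card_biUnion_le_card_mul _ _ _ hcard
    _ = τs.length := by simp

lemma exists_isAdjSwapBelow_list {m : ℕ} {i j : Fin n} (hij : i ≤ j) (hj : j.val < m) :
    ∃ τs : List (Perm (Fin n)), (∀ τ ∈ τs, IsAdjSwapBelow m τ) ∧ τs.length = j.val - i.val ∧
      τs.prod i = j ∧ τs.reverse.prod j = i := by
  obtain ⟨d, hd⟩ : ∃ d, j.val - i.val = d := ⟨_, rfl⟩
  induction d generalizing i with
  | zero =>
    obtain rfl : i = j := le_antisymm hij (Fin.le_def.2 (by omega))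
    exact ⟨[], by simp, by simp, rfl, rfl⟩
  | succ d ih =>
    set i' : Fin n := ⟨i.val + 1, by omega⟩
    obtain ⟨τs, hτs, hlen, hprod, hrev⟩ := ih (i := i') (Fin.le_def.2 (by simp [i']; omega))
      (by simp [i']; omega)
    refine ⟨τs ++ [swap i i'], ?_, by simp [hlen, i']; omega, ?_, ?_⟩
    · simp only [List.mem_append, List.mem_singleton]
      rintro τ (hτ | rfl)
      exacts [hτs τ hτ, ⟨i, i', rfl, by simp [i']; omega, rfl⟩]
    · simp [hprod]
    · simp [hrev]

end Equiv.Perm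

section zeta

variable {e : ℕ} [NeZero e]

lemma stdAddChar_intCast_eq_zeta_zpow (m : ℤ) : ZMod.stdAddChar (m : ZMod e) = zeta e ^ m := by
  rw [ZMod.stdAddChar_coe, zeta, ← Complex.exp_int_mul]
  ring_nf

lemma stdAddChar_natCast_eq_zeta_pow (m : ℕ) : ZMod.stdAddChar (m : ZMod e) = zeta e ^ m := by
  simpa using stdAddChar_intCast_eq_zeta_zpow (e := e) m

lemma stdAddChar_one_eq_zeta : ZMod.stdAddChar (1 : ZMod e) = zeta e := by
  simpa using stdAddChar_natCast_eq_zeta_pow (e := e) 1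

lemma exists_stdAddChar_eq_of_pow_eq_one {z : ℂ} (hz : z ^ e = 1) :
    ∃ k : ZMod e, ZMod.stdAddChar k = z := by
  obtain ⟨i, -, hi⟩ := (Complex.isPrimitiveRoot_exp e (NeZero.ne e)).eq_pow_of_pow_eq_one hz
  exact ⟨i, by rw [stdAddChar_natCast_eq_zeta_pow, ← hi, zeta]⟩

end zeta

@[ext]
structure ChargedPerm (e n : ℕ) where
  perm : Perm (Fin n)
  charge : Fin n → ZMod e

namespace ChargedPerm

variable {e n : ℕ}

instance : Mul (ChargedPerm e n) := ⟨fun g h => ⟨g.perm * h.perm, g.charge + h.charge ∘ ⇑g.perm⁻¹⟩⟩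
instance : One (ChargedPerm e n) := ⟨⟨1, 0⟩⟩
instance : Inv (ChargedPerm e n) := ⟨fun g => ⟨g.perm⁻¹, -(g.charge ∘ g.perm)⟩⟩

@[simp] lemma perm_mul (g h : ChargedPerm e n) : (g * h).perm = g.perm * h.perm := rfl
@[simp] lemma charge_mul (g h : ChargedPerm e n) :
    (g * h).charge = g.charge + h.charge ∘ ⇑g.perm⁻¹ := rfl
@[simp] lemma perm_one : (1 : ChargedPerm e n).perm = 1 := rfl
@[simp] lemma charge_one : (1 : ChargedPerm e n).charge = 0 := rfl
@[simp] lemma perm_inv (g : ChargedPerm e n) : g⁻¹.perm = g.perm⁻¹ := rfl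
@[simp] lemma charge_inv (g : ChargedPerm e n) : g⁻¹.charge = -(g.charge ∘ g.perm) := rfl

instance : Group (ChargedPerm e n) where
  mul_assoc f g h := by ext <;> simp [mul_assoc, add_assoc]
  one_mul g := by ext <;> simp
  mul_one g := by ext <;> simp
  inv_mul_cancel g := by ext <;> simp

lemma charge_sum_mul (g h : ChargedPerm e n) :
    ∑ i, (g * h).charge i = ∑ i, g.charge i + ∑ i, h.charge i := by
  simp [Finset.sum_add_distrib, Equiv.sum_comp]

def ofPerm : Perm (Fin n) →* ChargedPerm e n where
  toFun σ := ⟨σ, 0⟩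
  map_one' := rfl
  map_mul' σ τ := by ext <;> simp

@[simp] lemma perm_ofPerm (σ : Perm (Fin n)) : (ofPerm σ : ChargedPerm e n).perm = σ := rfl
@[simp] lemma charge_ofPerm (σ : Perm (Fin n)) : (ofPerm σ : ChargedPerm e n).charge = 0 := rfl

def tLetter (h : 1 < n) (k : ZMod e) : ChargedPerm e n where
  perm := swap ⟨0, by omega⟩ ⟨1, h⟩
  charge r := if r.val = 0 then -k else if r.val = 1 then k else 0

lemma tLetter_zero (h : 1 < n) :
    tLetter h 0 = (ofPerm (swap ⟨0, by omega⟩ ⟨1, h⟩) : ChargedPerm e n) := by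
  ext r <;> simp [tLetter]

def IsLetter (g : ChargedPerm e n) : Prop :=
  IsAdjSwapBelow n g.perm ∧ ∀ r, g.charge r ≠ 0 → r.val = 0 ∨ (g.perm⁻¹ r).val = 0

def parabolic (m : ℕ) : Subgroup (ChargedPerm e n) where
  carrier := {g | ∑ i, g.charge i = 0 ∧ ∀ i : Fin n, m ≤ i.val → g.perm i = i ∧ g.charge i = 0}
  one_mem' := by simp
  mul_mem' := by
    rintro g h ⟨hg, hg'⟩ ⟨hh, hh'⟩
    refine ⟨by rw [charge_sum_mul, hg, hh, add_zero], fun i hi => ?_⟩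
    have hgi := hg' i hi
    simp [(hh' i hi).1, (hh' i hi).2, hgi.1, hgi.2, g.perm.symm_apply_eq.2 hgi.1.symm]
  inv_mem' := by
    rintro g ⟨hg, hg'⟩
    refine ⟨by simp [Equiv.sum_comp g.perm g.charge, hg], fun i hi => ?_⟩
    simp [(hg' i hi).1, (hg' i hi).2, g.perm.symm_apply_eq.2 (hg' i hi).1.symm]

lemma ofPerm_mem_parabolic {m : ℕ} {τ : Perm (Fin n)} (hτ : IsAdjSwapBelow m τ) :
    ofPerm τ ∈ parabolic (e := e) m := by
  obtain ⟨i, j, hij, hj, rfl⟩ := hτ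
  refine ⟨by simp, fun r hr => ⟨swap_apply_of_ne_of_ne ?_ ?_, rfl⟩⟩ <;>
    exact fun h => by rw [Fin.ext_iff] at h; omega

lemma tLetter_mem_parabolic {m : ℕ} (hm : 2 ≤ m) (h : 1 < n) (k : ZMod e) :
    tLetter h k ∈ parabolic m := by
  have h0 : 0 < n := by omega
  refine ⟨?_, fun r hr => ?_⟩
  · rw [Fintype.sum_eq_add ⟨0, h0⟩ ⟨1, h⟩ (by simp [Fin.ext_iff]) (fun r hr => ?_)]
    · simp [tLetter]
    · simp only [tLetter, ne_eq, Fin.ext_iff] at hr ⊢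
      rw [if_neg hr.1, if_neg hr.2]
  · have hr0 : r.val ≠ 0 ∧ r.val ≠ 1 := by omega
    simp [tLetter, swap_apply_def, Fin.ext_iff, hr0]

lemma eq_one_of_mem_parabolic_one {g : ChargedPerm e n} (hg : g ∈ parabolic 1) : g = 1 := by
  obtain ⟨hsum, hfix⟩ := hg
  have hperm : ∀ i, g.perm i = i := by
    intro i
    by_cases hi : 1 ≤ i.val
    · exact (hfix i hi).1
    by_contra hne
    have : 1 ≤ (g.perm i).val := by
      by_contra h0
      exact hne (Fin.ext (by omega))
    exact hne (g.perm.injective (hfix _ this).1)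
  ext i
  · simp [hperm]
  · by_cases hi : 1 ≤ i.val
    · simp [(hfix i hi).2]
    · rw [Fintype.sum_eq_single i (fun j hj => (hfix j (by
        have := Fin.val_ne_of_ne hj; omega)).2)] at hsum
      simp [hsum]

lemma mem_parabolic_of_mem_succ {m : ℕ} {g : ChargedPerm e n} (hg : g ∈ parabolic (m + 1))
    {y : Fin n} (hy : y.val = m) (hperm : g.perm y = y) (hcharge : g.charge y = 0) :
    g ∈ parabolic m := by
  refine ⟨hg.1, fun i hi => ?_⟩
  rcases hi.lt_or_eq with hi | hi
  · exact hg.2 i hi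
  · obtain rfl : i = y := Fin.ext (by omega)
    exact ⟨hperm, hcharge⟩

def permHom : ChargedPerm e n →* Perm (Fin n) where
  toFun := perm
  map_one' := rfl
  map_mul' _ _ := rfl

lemma charge_mul_prod_of_forall_ne_zero {L : List (ChargedPerm e n)} (hL : ∀ x ∈ L, x.IsLetter)
    (g : ChargedPerm e n) {y : Fin n}
    (hy : ∀ t ≤ L.length, ((g * (L.take t).prod).perm⁻¹ y).val ≠ 0) :
    (g * L.prod).charge y = g.charge y := by
  induction L generalizing g with
  | nil => simp
  | cons x L ih =>
    have hx : x.charge (g.perm⁻¹ y) = 0 := by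
      by_contra h
      rcases (hL x List.mem_cons_self).2 _ h with h0 | h1
      · exact hy 0 (Nat.zero_le _) (by simpa using h0)
      · exact hy 1 (by simp) (by simpa [Perm.inv_def] using h1)
    rw [List.prod_cons, ← mul_assoc, ih (fun x hx' => hL x (List.mem_cons_of_mem _ hx')) _
      fun t ht => by simpa [mul_assoc] using hy (t + 1) (by simpa using ht)]
    simpa [Perm.inv_def] using hx

lemma exists_visit_zero_of_charge_ne_zero {L : List (ChargedPerm e n)}
    (hL : ∀ x ∈ L, x.IsLetter) {y : Fin n} (hy : L.prod.charge y ≠ 0) :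
    ∃ t ≤ L.length, ((L.take t).prod.perm⁻¹ y).val = 0 := by
  by_contra! h
  exact hy (by simpa using charge_mul_prod_of_forall_ne_zero hL 1 (by simpa using h))

def diagonalLam (hn : 0 < n) : ChargedPerm e n := ⟨1, 1 - Pi.single ⟨0, hn⟩ (n : ZMod e)⟩

lemma diagonalLam_mem_parabolic (hn : 0 < n) : diagonalLam (e := e) hn ∈ parabolic n :=
  ⟨by simp [diagonalLam, Finset.sum_sub_distrib], fun i hi => absurd i.isLt (by omega)⟩

theorem mul_sub_one_le_length_of_prod_eq_diagonalLam (he : (1 : ZMod e) ≠ 0) (hn : 0 < n)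
    {L : List (ChargedPerm e n)} (hL : ∀ x ∈ L, x.IsLetter) (hprod : L.prod = diagonalLam hn) :
    n * (n - 1) ≤ L.length := by
  have hmap (L' : List (ChargedPerm e n)) : (L'.map perm).prod = L'.prod.perm :=
    (map_list_prod permHom L').symm
  refine (Perm.mul_sub_one_le_length_of_forall_visit_zero (L.map perm)
    (by simpa using fun x hx => (hL x hx).1) (by rw [hmap, hprod]; rfl) fun y => ?_).trans_eq
    (List.length_map _)
  by_cases hy : y.val = 0
  · exact ⟨0, Nat.zero_le _, by simpa using hy⟩
  · simpa [← List.map_take, hmap] using exists_visit_zero_of_charge_ne_zero hL (y := y)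
      (by simp [hprod, diagonalLam, Fin.ext_iff, hy, he])

section toMatrix

variable [NeZero e]

noncomputable def toMatrix : ChargedPerm e n →* Matrix (Fin n) (Fin n) ℂ where
  toFun g := Matrix.of fun i j => if i = g.perm j then ZMod.stdAddChar (g.charge i) else 0
  map_one' := by
    ext i j
    simp [Matrix.one_apply]
  map_mul' g h := by
    ext i j
    rw [Matrix.mul_apply, Finset.sum_eq_single (h.perm j) (fun k _ hk => by simp [hk])
      (by simp)]
    by_cases hij : i = g.perm (h.perm j)
    · simp [hij, AddChar.map_add_eq_mul]
    · simp [hij]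

lemma toMatrix_apply (g : ChargedPerm e n) (i j : Fin n) :
    toMatrix g i j = if i = g.perm j then ZMod.stdAddChar (g.charge i) else 0 := rfl

lemma toMatrix_injective : Function.Injective (toMatrix : ChargedPerm e n → _) := by
  intro g h hgh
  have hperm : g.perm = h.perm := by
    ext j
    by_contra hne
    have := congrFun₂ hgh (g.perm j) j
    simp [toMatrix_apply, Fin.ext_iff, hne] at this
    exact (AddChar.val_isUnit _ _).ne_zero this
  refine ChargedPerm.ext hperm (funext fun i => ZMod.injective_stdAddChar ?_)
  have := congrFun₂ hgh i (g.perm⁻¹ i)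
  simpa [toMatrix_apply, hperm] using this

lemma toMatrix_apply_ne_zero_iff {g : ChargedPerm e n} {i j : Fin n} :
    toMatrix g i j ≠ 0 ↔ i = g.perm j := by
  by_cases h : i = g.perm j
  · simp [toMatrix_apply, h, (AddChar.val_isUnit _ _).ne_zero]
  · simp [toMatrix_apply, h]

lemma prod_nonzero_entries_toMatrix (g : ChargedPerm e n) :
    ∏ i, ∏ j, (if toMatrix g i j ≠ 0 then toMatrix g i j else 1) =
      ZMod.stdAddChar (∑ i, g.charge i) := by
  rw [AddChar.map_finsetSum]
  refine Finset.prod_congr rfl fun i _ => ?_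
  rw [Finset.prod_eq_single (g.perm⁻¹ i) (fun j _ hj => by
    rw [if_neg (toMatrix_apply_ne_zero_iff.not.2 fun h => hj (by simp [h]))]) (by simp)]
  simp [toMatrix_apply, (AddChar.val_isUnit _ _).ne_zero]

lemma isGeen_toMatrix {g : ChargedPerm e n} (hg : ∑ i, g.charge i = 0) :
    IsGeen e n (toMatrix g) := by
  refine ⟨fun i => ?_, fun j => ?_, fun i j hij => ?_, ?_⟩
  · simpa only [toMatrix_apply_ne_zero_iff, eq_comm] using g.perm.bijective.existsUnique i
  · simpa only [toMatrix_apply_ne_zero_iff] using existsUnique_eq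
  · rw [toMatrix_apply, if_pos (toMatrix_apply_ne_zero_iff.1 hij), ← AddChar.map_nsmul_eq_pow,
      nsmul_eq_mul, ZMod.natCast_self, zero_mul, AddChar.map_zero_eq_one]
  · rw [prod_nonzero_entries_toMatrix, hg, AddChar.map_zero_eq_one]

lemma exists_toMatrix_eq_of_isGeen {w : Matrix (Fin n) (Fin n) ℂ} (hw : IsGeen e n w) :
    ∃ g : ChargedPerm e n, ∑ i, g.charge i = 0 ∧ toMatrix g = w := by
  obtain ⟨hrow, hcol, hroot, hprod⟩ := hw
  choose σ hσ hσ_unique using hcol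
  have hσ_inj : Function.Injective σ := fun j j' h =>
    (hrow (σ j)).unique (hσ j) (h ▸ hσ j')
  set π := Equiv.ofBijective σ (Finite.injective_iff_bijective.1 hσ_inj)
  have hentry (i : Fin n) : w i (π.symm i) ≠ 0 := by
    simpa only [show σ (π.symm i) = i from π.apply_symm_apply i] using hσ (π.symm i)
  choose c hc using fun i => exists_stdAddChar_eq_of_pow_eq_one (hroot i _ (hentry i))
  have hw : toMatrix ⟨π, c⟩ = w := by
    ext i j
    rw [toMatrix_apply]
    split_ifs with h
    · rw [hc, h, Equiv.symm_apply_apply]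
    · by_contra hne
      exact h (hσ_unique j i (Ne.symm hne))
  refine ⟨⟨π, c⟩, ZMod.injective_stdAddChar ?_, hw⟩
  rw [← prod_nonzero_entries_toMatrix, hw, hprod, AddChar.map_zero_eq_one]

lemma tmat_eq_toMatrix (h : 1 < n) (k : ℤ) : tmat e n k = toMatrix (tLetter h (k : ZMod e)) := by
  ext a b
  rw [tmat, toMatrix_apply, Matrix.of_apply, tLetter]
  simp only [swap_apply_def, Fin.ext_iff]
  split_ifs <;> simp_all [AddChar.map_neg_eq_inv, stdAddChar_intCast_eq_zeta_zpow] <;> omega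

lemma smat_eq_toMatrix {j : ℕ} (h3 : 3 ≤ j) (hj : j ≤ n) :
    smat n j = toMatrix (ofPerm (swap ⟨j - 2, by omega⟩ ⟨j - 1, by omega⟩) : ChargedPerm e n) := by
  ext a b
  rw [smat, toMatrix_apply, Matrix.of_apply]
  simp only [perm_ofPerm, charge_ofPerm, Pi.zero_apply, AddChar.map_zero_eq_one,
    swap_apply_def, Fin.ext_iff, apply_ite (Fin.val : Fin n → ℕ)]
  split_ifs <;> first | rfl | omega

lemma toMatrix_tLetter_mem_Xset (h : 1 < n) (k : ZMod e) : toMatrix (tLetter h k) ∈ Xset e n :=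
  Or.inl ⟨k.val, k.val_lt, by rw [tmat_eq_toMatrix h, Int.cast_natCast, ZMod.natCast_zmod_val]⟩

lemma toMatrix_ofPerm_mem_Xset {τ : Perm (Fin n)} (hτ : IsAdjSwapBelow n τ) :
    toMatrix (ofPerm τ : ChargedPerm e n) ∈ Xset e n := by
  obtain ⟨i, j, hij, hj, rfl⟩ := hτ
  by_cases hi : i.val = 0
  · have h1 : 1 < n := by omega
    obtain rfl : i = ⟨0, Nat.zero_lt_of_lt h1⟩ := Fin.ext hi
    obtain rfl : j = ⟨1, h1⟩ := Fin.ext (by simp [hij])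
    rw [← tLetter_zero]
    exact toMatrix_tLetter_mem_Xset _ 0
  · refine Or.inr ⟨i.val + 2, by omega, by omega, ?_⟩
    rw [smat_eq_toMatrix (e := e) (by omega) (by omega)]
    congr
    simp [Fin.ext_iff, hij]

lemma exists_isLetter_of_mem_Xset (hn : 1 < n) {x : Matrix (Fin n) (Fin n) ℂ}
    (hx : x ∈ Xset e n) : ∃ g : ChargedPerm e n, g.IsLetter ∧ toMatrix g = x := by
  rcases hx with ⟨k, -, rfl⟩ | ⟨j, h3, hj, rfl⟩
  · refine ⟨tLetter hn ((k : ℤ) : ZMod e), ⟨⟨_, _, rfl, hn, rfl⟩, fun r hr => ?_⟩,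
      (tmat_eq_toMatrix hn k).symm⟩
    simp only [tLetter, swap_inv, swap_apply_def, Fin.ext_iff, ne_eq] at hr ⊢
    split_ifs at hr ⊢ <;> simp_all
  · refine ⟨ofPerm (swap ⟨j - 2, by omega⟩ ⟨j - 1, by omega⟩), ⟨⟨_, _, by simp; omega,
      by simp; omega, rfl⟩, by simp⟩, (smat_eq_toMatrix h3 hj).symm⟩

lemma toMatrix_diagonalLam (hn : 0 < n) : toMatrix (diagonalLam (e := e) hn) = lam e n := by
  ext i j
  rw [toMatrix_apply, lam, Matrix.diagonal_apply]
  by_cases hij : i = j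
  · subst hij
    by_cases hi : i.val = 0
    · obtain rfl : i = ⟨0, hn⟩ := Fin.ext hi
      simp [diagonalLam, ← stdAddChar_intCast_eq_zeta_zpow]
    · simp [diagonalLam, Fin.ext_iff, hi, stdAddChar_one_eq_zeta]
  · simp [diagonalLam, hij]

lemma forall_mem_map_ofPerm {m : ℕ} {τs : List (Perm (Fin n))}
    (hτs : ∀ τ ∈ τs, IsAdjSwapBelow m τ) :
    ∀ x ∈ τs.map (ofPerm (e := e)), toMatrix x ∈ Xset e n ∧ x ∈ parabolic m := by
  simp only [List.mem_map]
  rintro _ ⟨τ, hτ, rfl⟩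
  obtain ⟨i, j, hij, hj, rfl⟩ := hτs τ hτ
  exact ⟨toMatrix_ofPerm_mem_Xset ⟨i, j, hij, j.isLt, rfl⟩,
    ofPerm_mem_parabolic ⟨i, j, hij, hj, rfl⟩⟩

lemma exists_word_perm_apply_eq_charge_apply_eq {m : ℕ} (hm : 1 ≤ m) {y : Fin n} (hy : y.val = m)
    {p : Fin n} (hp : p ≤ y) (k : ZMod e) :
    ∃ L : List (ChargedPerm e n), (∀ x ∈ L, toMatrix x ∈ Xset e n ∧ x ∈ parabolic (m + 1)) ∧
      L.length ≤ 2 * m ∧ L.prod.perm p = y ∧ L.prod.charge y = k := by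
  have hn : 1 < n := by omega
  have ht (c : ZMod e) : toMatrix (tLetter hn c) ∈ Xset e n ∧ tLetter hn c ∈ parabolic (m + 1) :=
    ⟨toMatrix_tLetter_mem_Xset hn c, tLetter_mem_parabolic (by omega) hn c⟩
  by_cases hp0 : p.val = 0
  · obtain ⟨τs, hτs, hlen, hprod, -⟩ := Perm.exists_isAdjSwapBelow_list (m := m + 1)
      (i := ⟨1, hn⟩) (j := y) (Fin.le_def.2 (by simp; omega)) (by omega)
    refine ⟨τs.map ofPerm ++ [tLetter hn k], ?_, by simp [hlen]; omega, ?_, ?_⟩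
    · simp only [List.mem_append, List.mem_singleton]
      rintro x (hx | rfl)
      exacts [forall_mem_map_ofPerm hτs x hx, ht k]
    · obtain rfl : p = ⟨0, Nat.zero_lt_of_lt hn⟩ := Fin.ext hp0
      simp [← map_list_prod, tLetter, hprod]
    · simp [← map_list_prod, tLetter, Perm.inv_def, ← hprod]
  · obtain ⟨τs₁, hτs₁, hlen₁, -, hrev₁⟩ := Perm.exists_isAdjSwapBelow_list (m := m + 1)
      (i := ⟨1, hn⟩) (j := p) (Fin.le_def.2 (by simp; omega)) (by omega)
    obtain ⟨τs₂, hτs₂, hlen₂, hprod₂, -⟩ := Perm.exists_isAdjSwapBelow_list (m := m + 1)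
      (i := ⟨0, by omega⟩) (j := y) (Fin.le_def.2 (by simp)) (by omega)
    refine ⟨τs₂.map ofPerm ++ tLetter hn (-k) :: τs₁.reverse.map ofPerm, ?_, ?_, ?_, ?_⟩
    · simp only [List.mem_append, List.mem_cons]
      rintro x (hx | rfl | hx)
      exacts [forall_mem_map_ofPerm hτs₂ x hx, ht (-k),
        forall_mem_map_ofPerm (by simpa using hτs₁) x hx]
    · simp [hlen₁, hlen₂]
      omega
    · rw [List.prod_append, List.prod_cons, ← map_list_prod, ← map_list_prod]
      simp [tLetter, hrev₁, hprod₂]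
    · rw [List.prod_append, List.prod_cons, ← map_list_prod, ← map_list_prod]
      simp [tLetter, Perm.inv_def, ← hprod₂]

lemma exists_word_mul_inv_mem_parabolic {m : ℕ} (hm : 1 ≤ m) (hmn : m < n)
    {g : ChargedPerm e n} (hg : g ∈ parabolic (m + 1)) :
    ∃ L : List (ChargedPerm e n), (∀ x ∈ L, toMatrix x ∈ Xset e n) ∧ L.length ≤ 2 * m ∧
      g * L.prod⁻¹ ∈ parabolic m := by
  set y : Fin n := ⟨m, hmn⟩
  have hp : g.perm⁻¹ y ≤ y := by
    by_contra! h
    exact h.ne (by simpa using (hg.2 _ (Fin.lt_def.1 h)).1)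
  obtain ⟨L, hL, hlen, hperm, hcharge⟩ :=
    exists_word_perm_apply_eq_charge_apply_eq hm rfl hp (g.charge y)
  have hw : L.prod ∈ parabolic (m + 1) := Subgroup.list_prod_mem _ fun x hx => (hL x hx).2
  rw [Perm.inv_def] at hperm
  have hperm' : L.prod.perm.symm y = g.perm.symm y := by rw [Equiv.symm_apply_eq, hperm]
  refine ⟨L, fun x hx => (hL x hx).1, hlen,
    mem_parabolic_of_mem_succ (mul_mem hg (inv_mem hw)) (y := y) rfl ?_ ?_⟩
  · simp [hperm']
  · simp [hperm, hcharge]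

theorem exists_word_of_mem_parabolic {m : ℕ} (hm : 1 ≤ m) (hmn : m ≤ n)
    {g : ChargedPerm e n} (hg : g ∈ parabolic m) :
    ∃ L : List (ChargedPerm e n), (∀ x ∈ L, toMatrix x ∈ Xset e n) ∧
      L.length ≤ m * (m - 1) ∧ L.prod = g := by
  induction m, hm using Nat.le_induction generalizing g with
  | base => exact ⟨[], by simp, by simp, (eq_one_of_mem_parabolic_one hg).symm⟩
  | succ m hm ih =>
    obtain ⟨L, hL, hlen, hg'⟩ := exists_word_mul_inv_mem_parabolic hm hmn hg
    obtain ⟨L', hL', hlen', hprod'⟩ := ih (by omega) hg'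
    refine ⟨L' ++ L, by simpa [or_imp, forall_and] using ⟨hL', hL⟩, ?_, by simp [hprod']⟩
    obtain ⟨m, rfl⟩ := Nat.exists_eq_add_of_le' hm
    simp only [List.length_append, Nat.add_sub_cancel] at hlen' ⊢
    nlinarith

lemma exists_isLetter_list (hn : 1 < n) {l : List (Matrix (Fin n) (Fin n) ℂ)}
    (hl : ∀ x ∈ l, x ∈ Xset e n) :
    ∃ L : List (ChargedPerm e n), (∀ g ∈ L, g.IsLetter) ∧ L.map toMatrix = l := by
  induction l with
  | nil => exact ⟨[], by simp, rfl⟩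
  | cons x l ih =>
    obtain ⟨g, hg, rfl⟩ := exists_isLetter_of_mem_Xset hn (hl x List.mem_cons_self)
    obtain ⟨L, hL, rfl⟩ := ih fun y hy => hl y (List.mem_cons_of_mem _ hy)
    exact ⟨g :: L, by simpa using ⟨hg, hL⟩, rfl⟩

lemma len_toMatrix_le (hn : 0 < n) {g : ChargedPerm e n} (hg : ∑ i, g.charge i = 0) :
    len e n (toMatrix g) ≤ n * (n - 1) := by
  obtain ⟨L, hL, hlen, rfl⟩ := exists_word_of_mem_parabolic hn le_rfl
    (g := g) ⟨hg, fun i hi => absurd i.isLt (by omega)⟩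
  rw [map_list_prod]
  exact (len_prod_le_length (by simpa using hL)).trans (by simpa using hlen)

lemma le_len_lam (he : (1 : ZMod e) ≠ 0) (hn : 1 < n) : n * (n - 1) ≤ len e n (lam e n) := by
  have hn0 : 0 < n := by omega
  rw [← toMatrix_diagonalLam hn0]
  refine le_len_of_forall_word ?_ fun l hl hprod => ?_
  · obtain ⟨L, hL, -, hprod⟩ := exists_word_of_mem_parabolic hn0 le_rfl
      (diagonalLam_mem_parabolic (e := e) hn0)
    exact ⟨L.map toMatrix, by simpa using hL, by rw [← map_list_prod, hprod]⟩
  · obtain ⟨L, hL, rfl⟩ := exists_isLetter_list hn hl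
    rw [← map_list_prod] at hprod
    simpa using mul_sub_one_le_length_of_prod_eq_diagonalLam he _ hL (toMatrix_injective hprod)

end toMatrix

end ChargedPerm

/-- the maximal length over `X` of an element of `G(e,e,n)` is `n(n-1)`. -/
theorem statement_6 (e n : ℕ) (he : 2 ≤ e) (hn : 2 ≤ n) :
    IsGreatest (len e n '' {w | IsGeen e n w}) (n * (n - 1)) := by
  have : NeZero e := ⟨by omega⟩
  have : Fact (1 < e) := ⟨by omega⟩
  have hn0 : 0 < n := by omega
  have hlam := ChargedPerm.diagonalLam_mem_parabolic (e := e) hn0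
  have hlam_eq := ChargedPerm.toMatrix_diagonalLam (e := e) hn0
  refine ⟨⟨lam e n, ?_, le_antisymm ?_ (ChargedPerm.le_len_lam one_ne_zero hn)⟩, ?_⟩
  · exact hlam_eq ▸ ChargedPerm.isGeen_toMatrix hlam.1
  · exact hlam_eq ▸ ChargedPerm.len_toMatrix_le hn0 hlam.1
  · rintro _ ⟨w, hw, rfl⟩
    obtain ⟨g, hg, rfl⟩ := ChargedPerm.exists_toMatrix_eq_of_isGeen hw
    exact ChargedPerm.len_toMatrix_le hn0 hg
end

section
/- The element λ = diag(ζ_e^{-(n-1)}, ζ_e, ζ_e, ..., ζ_e) ∈ G(e,e,n) has length n(n-1) over X, namely the maximal length, and the word (t_1 t_0)(s_3 t_1 t_0 s_3)···(s_n···s_3 t_1 t_0 s_3···s_n) is a reduced expression of λ. -/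
open Matrix Complex
open scoped Classical

/-- The block `s_i ⋯ s_3 t_1 t_0 s_3 ⋯ s_i` (for `i ≥ 2`; for `i = 2` it is `t_1 t_0`). -/
noncomputable def lamBlock (e n : ℕ) (i : ℕ) : List (Matrix (Fin n) (Fin n) ℂ) :=
  ((List.range (i - 2)).reverse.map fun m => smat n (m + 3)) ++
    [tmat e n 1, tmat e n 0] ++ ((List.range (i - 2)).map fun m => smat n (m + 3))

/-- The word `(t_1 t_0)(s_3 t_1 t_0 s_3) ⋯ (s_n ⋯ s_3 t_1 t_0 s_3 ⋯ s_n)`. -/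
noncomputable def lamWord (e n : ℕ) : List (Matrix (Fin n) (Fin n) ℂ) :=
  ((List.range (n - 1)).map fun m => lamBlock e n (m + 2)).flatten

/-!
Every generator in `X` is a monomial matrix exchanging two adjacent positions, and only the `t_i`
change phases, namely those of the columns in the first two positions. Give a pair of columns
`a < b` of a monomial matrix the weight `1` if the pair is inverted, and otherwise `0` or `2`
according as the phase of column `b` is trivial or not. Multiplying by a generator changes the
weight of the pair whose positions it exchanges by at most one and leaves all other weights
alone: the phase of `b` can only change while `b` occupies one of the first two positions, and
then `b` precedes `a` unless the pair is the exchanged one. The total weight vanishes at the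
identity and equals `n(n-1)` at `λ`, where no pair is inverted and every column
but the first carries the phase `ζ_e`. Hence no word for `λ` is shorter than `n(n-1)`.
-/

open Equiv

section MonomialMatrix

variable {ι R : Type*} [DecidableEq ι] [Semiring R]

def monomialMatrix (σ : Perm ι) (q : ι → R) : Matrix ι ι R :=
  Matrix.of fun a b => if σ b = a then q b else 0

lemma monomialMatrix_mul_monomialMatrix [Fintype ι] (σ τ : Perm ι) (p q : ι → R) :
    monomialMatrix σ p * monomialMatrix τ q = monomialMatrix (σ * τ) (fun b => p (τ b) * q b) := by
  ext a b
  change _ = if σ (τ b) = a then p (τ b) * q b else 0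
  simp [monomialMatrix, Matrix.mul_apply, ite_mul, mul_ite]

lemma monomialMatrix_one_mul_monomialMatrix_one [Fintype ι] (p q : ι → R) :
    monomialMatrix 1 p * monomialMatrix 1 q = monomialMatrix 1 (p * q) := by
  rw [monomialMatrix_mul_monomialMatrix, one_mul]
  rfl

lemma monomialMatrix_one (q : ι → R) : monomialMatrix 1 q = Matrix.diagonal q := by
  ext a b
  by_cases h : a = b <;> simp [monomialMatrix, h, eq_comm]

lemma one_eq_monomialMatrix : (1 : Matrix ι ι R) = monomialMatrix 1 1 := by
  rw [monomialMatrix_one, Pi.one_def, Matrix.diagonal_one]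

lemma eq_of_monomialMatrix_eq_diagonal {σ : Perm ι} {q d : ι → R}
    (h : monomialMatrix σ q = Matrix.diagonal d) (hd : ∀ b, d b ≠ 0) : σ = 1 ∧ q = d := by
  have hfix : ∀ b, σ b = b := fun b => by
    by_contra hb
    exact hd b (by simpa [monomialMatrix, hb] using (congrFun (congrFun h b) b).symm)
  refine ⟨Equiv.ext hfix, funext fun b => ?_⟩
  simpa [monomialMatrix, hfix b] using congrFun (congrFun h b) b

end MonomialMatrix

section Generators

variable {e n : ℕ}

lemma zeta_ne_zero (e : ℕ) : zeta e ≠ 0 := Complex.exp_ne_zero _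

lemma zeta_ne_one (he : 2 ≤ e) : zeta e ≠ 1 :=
  (Complex.isPrimitiveRoot_exp e (by omega)).ne_one (by omega)

lemma smat_eq_monomialMatrix {j : ℕ} (hj3 : 3 ≤ j) (hjn : j ≤ n) :
    smat n j = monomialMatrix (swap ⟨j - 2, by omega⟩ ⟨j - 1, by omega⟩) 1 := by
  ext a b
  simp only [smat, monomialMatrix, Matrix.of_apply, swap_apply_def, Fin.ext_iff, Pi.one_apply]
  split_ifs <;> first | rfl | omega | simp_all

noncomputable def tPhase (e n : ℕ) (i : ℤ) (c : Fin n) : ℂ :=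
  if (c : ℕ) = 0 then zeta e ^ i else if (c : ℕ) = 1 then zeta e ^ (-i) else 1

lemma tmat_eq_monomialMatrix (hn : 2 ≤ n) (i : ℤ) :
    tmat e n i = monomialMatrix (swap ⟨0, by omega⟩ ⟨1, hn⟩) (tPhase e n i) := by
  ext a b
  simp only [tmat, monomialMatrix, tPhase, Matrix.of_apply, swap_apply_def, Fin.ext_iff]
  split_ifs <;> first | rfl | omega | simp_all

end Generators

section Potential

variable {n : ℕ} {R : Type*} [Semiring R]

def IsPhasedAdjSwap (g : Matrix (Fin n) (Fin n) R) : Prop :=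
  ∃ (i j : Fin n) (p : Fin n → R), (j : ℕ) = i + 1 ∧ g = monomialMatrix (swap i j) p ∧
    ∀ c, p c ≠ 1 → (i : ℕ) = 0 ∧ (c : ℕ) ≤ 1

lemma isPhasedAdjSwap_of_mem_Xset {e : ℕ} (hn : 2 ≤ n) {x : Matrix (Fin n) (Fin n) ℂ}
    (hx : x ∈ Xset e n) : IsPhasedAdjSwap x := by
  rcases hx with ⟨i, -, rfl⟩ | ⟨j, hj3, hjn, rfl⟩
  · refine ⟨_, _, _, rfl, tmat_eq_monomialMatrix hn i, fun c hc => ⟨rfl, ?_⟩⟩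
    by_contra hc1
    exact hc (by simp [tPhase, show (c : ℕ) ≠ 0 by omega, show (c : ℕ) ≠ 1 by omega])
  · exact ⟨_, _, 1, by simp only; omega, smat_eq_monomialMatrix hj3 hjn, fun c hc => absurd rfl hc⟩

lemma swap_lt_swap_iff {i j x y : Fin n} (hij : (j : ℕ) = i + 1)
    (hxy : ¬(x ∈ ({i, j} : Finset (Fin n)) ∧ y ∈ ({i, j} : Finset (Fin n)))) :
    swap i j x < swap i j y ↔ x < y := by
  simp only [Finset.mem_insert, Finset.mem_singleton, Fin.ext_iff] at hxy
  simp only [swap_apply_def, Fin.lt_def, Fin.ext_iff]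
  split_ifs <;> omega

noncomputable def pairWeight (π : Perm (Fin n)) (q : Fin n → R) (a b : Fin n) : ℕ :=
  if π (max a b) < π (min a b) then 1 else if q (max a b) = 1 then 0 else 2

lemma pairWeight_swap_mul_le {i j : Fin n} {p : Fin n → R} (hij : (j : ℕ) = i + 1)
    (hp : ∀ c, p c ≠ 1 → (i : ℕ) = 0 ∧ (c : ℕ) ≤ 1) (π : Perm (Fin n)) (q : Fin n → R)
    {a b : Fin n} (hab : a ≠ b) :
    pairWeight (swap i j * π) (fun c => p (π c) * q c) a b ≤
      pairWeight π q a b + if π a ∈ ({i, j} : Finset (Fin n)) ∧ π b ∈ ({i, j} : Finset (Fin n))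
        then 1 else 0 := by
  set S : Finset (Fin n) := {i, j}
  have hlh : min a b < max a b := min_lt_max.mpr hab
  have hS_iff : (π a ∈ S ∧ π b ∈ S) ↔ (π (min a b) ∈ S ∧ π (max a b) ∈ S) := by
    rcases le_total a b with hle | hle
    · rw [min_eq_left hle, max_eq_right hle]
    · rw [min_eq_right hle, max_eq_left hle, and_comm]
  simp only [pairWeight]
  generalize min a b = l, max a b = h at hlh hS_iff ⊢
  have hπ : π h ≠ π l := π.injective.ne hlh.ne'
  by_cases hS : π l ∈ S ∧ π h ∈ S
  · have hflip : (swap i j * π) h < (swap i j * π) l ∨ π h < π l := by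
      simp only [S, Finset.mem_insert, Finset.mem_singleton] at hS
      rcases hS with ⟨hl | hl, hh | hh⟩ <;> simp only [Perm.mul_apply, hl, hh, swap_apply_left,
        swap_apply_right, Fin.lt_def] at hπ ⊢ <;> omega
    rw [if_pos (hS_iff.2 hS)]
    rcases hflip with hflip | hflip
    · rw [if_pos hflip]
      omega
    · rw [if_pos hflip]
      split_ifs <;> omega
  · have hord : (swap i j * π) h < (swap i j * π) l ↔ π h < π l :=
      swap_lt_swap_iff hij fun h' => hS ⟨h'.2, h'.1⟩
    rw [if_neg (fun h' => hS (hS_iff.1 h')), add_zero]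
    simp only [hord]
    by_cases hinv : π h < π l
    · simp [hinv]
    · have hph : p (π h) = 1 := by
        by_contra hne
        obtain ⟨hi0, hh1⟩ := hp _ hne
        refine hS ⟨?_, ?_⟩ <;>
          simp only [S, Finset.mem_insert, Finset.mem_singleton, Fin.ext_iff, Fin.lt_def]
            at hinv ⊢ <;>
          omega
      simp [hinv, hph]

noncomputable def potential (π : Perm (Fin n)) (q : Fin n → R) : ℕ :=
  ∑ x ∈ (Finset.univ : Finset (Fin n)).offDiag, pairWeight π q x.1 x.2

lemma card_offDiag_filter_mem_pair_le_two (π : Perm (Fin n)) (i j : Fin n) :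
    ((Finset.univ : Finset (Fin n)).offDiag.filter fun x =>
      π x.1 ∈ ({i, j} : Finset (Fin n)) ∧ π x.2 ∈ ({i, j} : Finset (Fin n))).card ≤ 2 := by
  refine (Finset.card_le_card fun x hx => ?_).trans
    (Finset.card_le_two (a := (π⁻¹ i, π⁻¹ j)) (b := (π⁻¹ j, π⁻¹ i)))
  simp only [Finset.mem_filter, Finset.mem_offDiag, Finset.mem_univ, true_and,
    Finset.mem_insert, Finset.mem_singleton] at hx ⊢
  obtain ⟨hne, h1 | h1, h2 | h2⟩ := hx <;>
    simp only [Prod.ext_iff, Perm.eq_inv_iff_eq, h1, h2, true_and, and_true] <;>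
    first | tauto | exact absurd (π.injective (h1.trans h2.symm)) hne

lemma potential_swap_mul_le {i j : Fin n} {p : Fin n → R} (hij : (j : ℕ) = i + 1)
    (hp : ∀ c, p c ≠ 1 → (i : ℕ) = 0 ∧ (c : ℕ) ≤ 1) (π : Perm (Fin n)) (q : Fin n → R) :
    potential (swap i j * π) (fun c => p (π c) * q c) ≤ potential π q + 2 :=
  calc _ ≤ ∑ x ∈ (Finset.univ : Finset (Fin n)).offDiag, (pairWeight π q x.1 x.2 +
        if π x.1 ∈ ({i, j} : Finset (Fin n)) ∧ π x.2 ∈ ({i, j} : Finset (Fin n)) then 1 else 0) :=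
        Finset.sum_le_sum fun x hx =>
          pairWeight_swap_mul_le hij hp π q (Finset.mem_offDiag.1 hx).2.2
    _ ≤ potential π q + 2 := by
        rw [Finset.sum_add_distrib, Finset.sum_boole, Nat.cast_id]
        exact Nat.add_le_add_left (card_offDiag_filter_mem_pair_le_two π i j) _

lemma exists_prod_eq_monomialMatrix_potential_le (l : List (Matrix (Fin n) (Fin n) R))
    (hl : ∀ x ∈ l, IsPhasedAdjSwap x) :
    ∃ π q, l.prod = monomialMatrix π q ∧ potential π q ≤ 2 * l.length := by
  induction l with
  | nil =>
    refine ⟨1, 1, one_eq_monomialMatrix, le_of_eq ?_⟩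
    simp [potential, pairWeight, not_lt.2 min_le_max]
  | cons x l ih =>
    obtain ⟨π, q, hprod, hpot⟩ := ih fun y hy => hl y (List.mem_cons_of_mem x hy)
    obtain ⟨i, j, p, hij, rfl, hp⟩ := hl _ List.mem_cons_self
    refine ⟨swap i j * π, fun c => p (π c) * q c, ?_, ?_⟩
    · rw [List.prod_cons, hprod, monomialMatrix_mul_monomialMatrix]
    · have := potential_swap_mul_le hij hp π q
      simp only [List.length_cons]
      omega

lemma potential_one {d : Fin n → R} (hd : ∀ b : Fin n, (b : ℕ) ≠ 0 → d b ≠ 1) :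
    potential 1 d = 2 * (n * (n - 1)) := by
  have hweight : ∀ x ∈ (Finset.univ : Finset (Fin n)).offDiag, pairWeight 1 d x.1 x.2 = 2 := by
    intro x hx
    have hlt : min x.1 x.2 < max x.1 x.2 := min_lt_max.2 (Finset.mem_offDiag.1 hx).2.2
    have hmax : ((max x.1 x.2 : Fin n) : ℕ) ≠ 0 := by rw [Fin.lt_def] at hlt; omega
    have hsorted : ¬(1 : Perm (Fin n)) (max x.1 x.2) < (1 : Perm (Fin n)) (min x.1 x.2) :=
      not_lt.2 hlt.le
    rw [pairWeight, if_neg hsorted, if_neg (hd _ hmax)]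
  rw [potential, Finset.sum_congr rfl hweight, Finset.sum_const, Finset.offDiag_card,
    Finset.card_univ, Fintype.card_fin, smul_eq_mul, Nat.mul_sub_one, Nat.mul_comm]

end Potential

section Lambda

variable {e n : ℕ}

lemma mul_pred_le_length_of_prod_eq_lam (he : 2 ≤ e) (hn : 2 ≤ n)
    {l : List (Matrix (Fin n) (Fin n) ℂ)} (hX : ∀ x ∈ l, x ∈ Xset e n)
    (hl : l.prod = lam e n) : n * (n - 1) ≤ l.length := by
  obtain ⟨π, q, hprod, hpot⟩ := exists_prod_eq_monomialMatrix_potential_le l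
    fun x hx => isPhasedAdjSwap_of_mem_Xset hn (hX x hx)
  rw [hl, lam] at hprod
  obtain ⟨rfl, rfl⟩ := eq_of_monomialMatrix_eq_diagonal hprod.symm fun b => by
    split_ifs
    exacts [zpow_ne_zero _ (zeta_ne_zero e), zeta_ne_zero e]
  rw [potential_one fun b hb => by simp [hb, zeta_ne_one he]] at hpot
  omega

noncomputable def blockPhase (e n k : ℕ) (c : Fin n) : ℂ :=
  if (c : ℕ) = 0 then zeta e ^ (-1 : ℤ) else if (c : ℕ) = k + 1 then zeta e else 1

lemma lamBlock_succ (k : ℕ) :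
    lamBlock e n (k + 3) = smat n (k + 3) :: (lamBlock e n (k + 2) ++ [smat n (k + 3)]) := by
  simp [lamBlock, List.range_succ]

lemma prod_lamBlock {k : ℕ} (hk : k + 2 ≤ n) :
    (lamBlock e n (k + 2)).prod = monomialMatrix 1 (blockPhase e n k) := by
  induction k with
  | zero =>
    have hblock : lamBlock e n 2 = [tmat e n 1, tmat e n 0] := by simp [lamBlock]
    rw [hblock, List.prod_cons, List.prod_singleton, tmat_eq_monomialMatrix (by omega),
      tmat_eq_monomialMatrix (by omega), monomialMatrix_mul_monomialMatrix, Equiv.swap_mul_self]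
    congr 1
    funext c
    simp only [tPhase, blockPhase, swap_apply_def, Fin.ext_iff]
    split_ifs <;> simp_all
  | succ k ih =>
    rw [lamBlock_succ, List.prod_cons, List.prod_append, List.prod_singleton, ih (by omega),
      smat_eq_monomialMatrix (by omega) hk, monomialMatrix_mul_monomialMatrix,
      monomialMatrix_mul_monomialMatrix, one_mul, Equiv.swap_mul_self]
    congr 1
    funext c
    simp only [blockPhase, swap_apply_def, Fin.ext_iff, Pi.one_apply]
    split_ifs <;> simp_all

noncomputable def prefixPhase (e n r : ℕ) (c : Fin n) : ℂ :=
  if (c : ℕ) = 0 then zeta e ^ (-(r : ℤ)) else if (c : ℕ) ≤ r then zeta e else 1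

lemma prod_flatten_lamBlock {r : ℕ} (hr : r + 1 ≤ n) :
    (((List.range r).map fun m => lamBlock e n (m + 2)).flatten).prod =
      monomialMatrix 1 (prefixPhase e n r) := by
  induction r with
  | zero =>
    rw [List.range_zero, List.map_nil, List.flatten_nil, List.prod_nil, one_eq_monomialMatrix]
    congr 1
    funext c
    simp only [prefixPhase, Pi.one_apply]
    split_ifs <;> simp_all
  | succ r ih =>
    rw [List.range_succ, List.map_append, List.flatten_append, List.prod_append, ih (by omega),
      List.map_singleton, List.flatten_singleton, prod_lamBlock (by omega),
      monomialMatrix_one_mul_monomialMatrix_one]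
    congr 1
    funext c
    simp only [prefixPhase, blockPhase, Pi.mul_apply]
    split_ifs <;> first | omega | simp [zpow_add₀ (zeta_ne_zero e), mul_comm]

lemma prod_lamWord (e n : ℕ) : (lamWord e n).prod = lam e n := by
  rcases Nat.eq_zero_or_pos n with rfl | hn
  · exact Subsingleton.elim _ _
  rw [lamWord, prod_flatten_lamBlock (by omega), monomialMatrix_one, lam]
  congr 1
  funext c
  simp only [prefixPhase]
  split_ifs <;> first | omega | simp [Nat.cast_sub (by omega : 1 ≤ n)]

lemma length_lamBlock (e n m : ℕ) : (lamBlock e n (m + 2)).length = 2 * m + 2 := by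
  simp [lamBlock]
  omega

lemma sum_map_range_two_mul_add_two (r : ℕ) :
    ((List.range r).map fun m => 2 * m + 2).sum = r * (r + 1) := by
  induction r with
  | zero => rfl
  | succ r ih => rw [List.sum_range_succ, ih]; ring

lemma length_lamWord (e n : ℕ) : (lamWord e n).length = n * (n - 1) := by
  rw [lamWord, List.length_flatten, List.map_map]
  simp only [Function.comp_def, length_lamBlock, sum_map_range_two_mul_add_two]
  rcases n with _ | n
  · rfl
  · rw [Nat.add_sub_cancel, Nat.mul_comm]

lemma mem_Xset_of_mem_lamWord (he : 2 ≤ e) {x : Matrix (Fin n) (Fin n) ℂ}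
    (hx : x ∈ lamWord e n) : x ∈ Xset e n := by
  simp only [lamWord, List.mem_flatten, List.mem_map, List.mem_range] at hx
  obtain ⟨_, ⟨m, hm, rfl⟩, hx⟩ := hx
  simp only [lamBlock, List.mem_append, List.mem_map, List.mem_reverse, List.mem_range,
    List.mem_cons, List.not_mem_nil, or_false] at hx
  rcases hx with (⟨k, hk, rfl⟩ | rfl | rfl) | ⟨k, hk, rfl⟩
  · exact Or.inr ⟨k + 3, by omega, by omega, rfl⟩
  · exact Or.inl ⟨1, by omega, by norm_num⟩
  · exact Or.inl ⟨0, by omega, by norm_num⟩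
  · exact Or.inr ⟨k + 3, by omega, by omega, rfl⟩

end Lambda

lemma len_eq_length {e n : ℕ} {w : Matrix (Fin n) (Fin n) ℂ} {l : List (Matrix (Fin n) (Fin n) ℂ)}
    (hX : ∀ x ∈ l, x ∈ Xset e n) (hl : l.prod = w)
    (hmin : ∀ l' : List (Matrix (Fin n) (Fin n) ℂ), (∀ x ∈ l', x ∈ Xset e n) → l'.prod = w →
      l.length ≤ l'.length) :
    len e n w = l.length :=
  le_antisymm (Nat.sInf_le ⟨l, hX, rfl, hl⟩)
    (le_csInf ⟨_, l, hX, rfl, hl⟩ fun _ ⟨l', hX', hlen, hl'⟩ => hlen ▸ hmin l' hX' hl')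

/-- `λ = diag(ζ_e^{-(n-1)}, ζ_e, …, ζ_e)` has length `n(n-1)` over `X` and
the word `(t_1 t_0)(s_3 t_1 t_0 s_3)⋯(s_n⋯s_3 t_1 t_0 s_3⋯s_n)` is a reduced expression
of `λ`. -/
theorem statement_8 (e n : ℕ) (he : 2 ≤ e) (hn : 2 ≤ n) :
    len e n (lam e n) = n * (n - 1) ∧
    (∀ x ∈ lamWord e n, x ∈ Xset e n) ∧
    (lamWord e n).length = n * (n - 1) ∧
    (lamWord e n).prod = lam e n := by
  have hX : ∀ x ∈ lamWord e n, x ∈ Xset e n := fun _ => mem_Xset_of_mem_lamWord he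
  have hprod := prod_lamWord e n
  refine ⟨?_, hX, length_lamWord e n, hprod⟩
  rw [← length_lamWord e n, len_eq_length hX hprod]
  intro l hXl hl
  rw [length_lamWord]
  exact mul_pred_le_length_of_prod_eq_lam he hn hXl hl
end

section
/- Let w ∈ G(e,e,n) with w[1,c_1] = a_1 and w[2,c_2] = a_2 the nonzero entries on rows 1 and 2. If c_1 < c_2, then for every 0 ≤ k ≤ e-1, ℓ(t_k w) = ℓ(w) − 1 if and only if a_2 ≠ 1. If c_1 > c_2, then for every 0 ≤ k ≤ e-1, ℓ(t_k w) = ℓ(w) − 1 if and only if a_1 = ζ_e^{-k}. -/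
open Matrix Complex
open scoped Classical

/-
The length is given by a closed formula `ℓ(w) = ∑_{i<j} pairLength w i j`, where the contribution
of rows `i < j` depends only on whether `a_j = 1` and whether `c_i < c_j`. Each generator is a
`twist` exchanging two adjacent rows with scalars `z⁻¹, z`: it permutes the other pairs of rows
along with their contributions and changes the contribution of the exchanged pair by exactly one,
so the formula is a lower bound for `ℓ`. Conversely, if no generator decreases the formula, going
down the rows (with the `t_k` for which `ζ_e^k a_1 = 1` on the first pair, with `s_j` on the
others) shows that every adjacent pair is sorted and `a_j = 1` for `j ≥ 2`; the product condition
then gives `a_1 = 1`, so `w = 1`. Hence the formula is attained by a word, and the theorem is read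
off from the contribution of the first two rows.
-/

namespace Geen

section Monomial

variable {ι R : Type*} [Zero R] {w w' : Matrix ι ι R}

def IsMonomial (w : Matrix ι ι R) : Prop :=
  (∀ i, ∃! j, w i j ≠ 0) ∧ (∀ j, ∃! i, w i j ≠ 0)

/-- The column `c_i` of the nonzero entry of row `i` (junk value `i` if row `i` vanishes). -/
noncomputable def col (w : Matrix ι ι R) (i : ι) : ι :=
  if h : ∃ j, w i j ≠ 0 then h.choose else i

/-- The entry `a_i = w[i, c_i]`; rows are indexed from `0`, so the paper's `a_1` is `entry w 0`. -/
noncomputable def entry (w : Matrix ι ι R) (i : ι) : R := w i (col w i)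

namespace IsMonomial

theorem entry_ne_zero (hw : IsMonomial w) (i : ι) : entry w i ≠ 0 := by
  obtain ⟨j, hj, -⟩ := hw.1 i
  have h : ∃ j, w i j ≠ 0 := ⟨j, hj⟩
  rw [entry, col, dif_pos h]
  exact h.choose_spec

theorem col_eq (hw : IsMonomial w) {i j : ι} (h : w i j ≠ 0) : col w i = j :=
  (hw.1 i).unique (hw.entry_ne_zero i) h

theorem col_injective (hw : IsMonomial w) : Function.Injective (col w) := by
  intro i i' h
  refine (hw.2 (col w i)).unique (hw.entry_ne_zero i) ?_
  rw [h]
  exact hw.entry_ne_zero i'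

theorem apply_eq (hw : IsMonomial w) (i j : ι) :
    w i j = if j = col w i then entry w i else 0 := by
  split_ifs with h
  · rw [h, entry]
  · by_contra hij
    exact h (hw.col_eq hij).symm

theorem of_ne_zero_iff (hw : IsMonomial w) (σ : Equiv.Perm ι)
    (h : ∀ i j, w' i j ≠ 0 ↔ w (σ i) j ≠ 0) : IsMonomial w' := by
  refine ⟨fun i => ?_, fun j => ?_⟩
  · obtain ⟨j, hj, hu⟩ := hw.1 (σ i)
    exact ⟨j, (h i j).2 hj, fun j' hj' => hu j' ((h i j').1 hj')⟩
  · obtain ⟨i, hi, hu⟩ := hw.2 j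
    refine ⟨σ.symm i, (h _ j).2 (by rwa [σ.apply_symm_apply]), fun i' hi' => ?_⟩
    rw [← hu _ ((h i' j).1 hi'), σ.symm_apply_apply]

theorem col_of_ne_zero_iff (hw : IsMonomial w) (σ : Equiv.Perm ι)
    (h : ∀ i j, w' i j ≠ 0 ↔ w (σ i) j ≠ 0) (i : ι) : col w' i = col w (σ i) :=
  (hw.of_ne_zero_iff σ h).col_eq ((h i _).2 (hw.entry_ne_zero (σ i)))

end IsMonomial

end Monomial

theorem IsMonomial.prod_ite_ne_zero {ι R : Type*} [Fintype ι] [CommMonoidWithZero R]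
    [DecidablePred (· ≠ (0 : R))] {w : Matrix ι ι R} (hw : IsMonomial w) :
    ∏ i, ∏ j, (if w i j ≠ 0 then w i j else 1) = ∏ i, entry w i := by
  refine Finset.prod_congr rfl fun i _ => ?_
  rw [Finset.prod_eq_single (col w i)]
  · exact if_pos (hw.entry_ne_zero i)
  · intro j _ hj
    exact if_neg fun h => hj (hw.col_eq h).symm
  · exact fun h => absurd (Finset.mem_univ _) h

section One

variable {ι R : Type*} [MulZeroOneClass R]

theorem isMonomial_one [NeZero (1 : R)] [DecidableEq ι] : IsMonomial (1 : Matrix ι ι R) := by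
  refine ⟨fun i => ⟨i, by simp, fun j hj => ?_⟩, fun j => ⟨j, by simp, fun i hi => ?_⟩⟩
  · by_contra h
    exact hj (Matrix.one_apply_ne' h)
  · by_contra h
    exact hi (Matrix.one_apply_ne h)

theorem col_one [NeZero (1 : R)] [DecidableEq ι] (i : ι) : col (1 : Matrix ι ι R) i = i :=
  isMonomial_one.col_eq (by simp)

theorem entry_one [NeZero (1 : R)] [DecidableEq ι] (i : ι) : entry (1 : Matrix ι ι R) i = 1 := by
  rw [entry, col_one, Matrix.one_apply_eq]

theorem IsMonomial.eq_one [LinearOrder ι] [Finite ι] {w : Matrix ι ι R} (hw : IsMonomial w)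
    (hentry : ∀ i, entry w i = 1) (hcol : StrictMono (col w)) : w = 1 := by
  ext i j
  rw [hw.apply_eq, hentry, hcol.apply_eq, Matrix.one_apply]
  rcases eq_or_ne i j with rfl | h
  · simp
  · simp [h, h.symm]

end One

section GroupGeen

variable {e n : ℕ} {w : Matrix (Fin n) (Fin n) ℂ}

theorem _root_.IsGeen.isMonomial (hw : IsGeen e n w) : IsMonomial w := ⟨hw.1, hw.2.1⟩

theorem _root_.IsGeen.entry_pow (hw : IsGeen e n w) (i : Fin n) : entry w i ^ e = 1 :=
  hw.2.2.1 _ _ (hw.isMonomial.entry_ne_zero i)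

theorem _root_.IsGeen.prod_entry (hw : IsGeen e n w) : ∏ i, entry w i = 1 := by
  rw [← hw.isMonomial.prod_ite_ne_zero]
  exact hw.2.2.2

end GroupGeen

section Twist

variable {n : ℕ}

noncomputable def twistDiag (a b : Fin n) (z : ℂ) (i : Fin n) : ℂ :=
  if i = a then z⁻¹ else if i = b then z else 1

noncomputable def twist (a b : Fin n) (z : ℂ) : Matrix (Fin n) (Fin n) ℂ :=
  diagonal (twistDiag a b z) * swap ℂ a b

theorem twist_mul_apply (a b : Fin n) (z : ℂ) (w : Matrix (Fin n) (Fin n) ℂ) (i j : Fin n) :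
    (twist a b z * w) i j = twistDiag a b z i * w (Equiv.swap a b i) j := by
  simp [twist, Matrix.mul_assoc, swap, PEquiv.toMatrix_toPEquiv_mul]

theorem twist_apply (a b : Fin n) (z : ℂ) (i j : Fin n) :
    twist a b z i j = if j = Equiv.swap a b i then twistDiag a b z i else 0 := by
  rw [← Matrix.mul_one (twist a b z), twist_mul_apply, Matrix.one_apply]
  split_ifs <;> simp_all [eq_comm]

variable {a b : Fin n} {z : ℂ} {w : Matrix (Fin n) (Fin n) ℂ}

theorem twistDiag_ne_zero (hz : z ≠ 0) (i : Fin n) : twistDiag a b z i ≠ 0 := by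
  unfold twistDiag
  split_ifs <;> simp [hz]

theorem twistDiag_mul_swap (hab : a ≠ b) (hz : z ≠ 0) (i : Fin n) :
    twistDiag a b z i * twistDiag a b z (Equiv.swap a b i) = 1 := by
  rcases eq_or_ne i a with rfl | hia
  · simp [twistDiag, hab.symm, hz]
  rcases eq_or_ne i b with rfl | hib
  · simp [twistDiag, hab.symm, hz]
  simp [twistDiag, Equiv.swap_apply_of_ne_of_ne hia hib, hia, hib]

theorem twist_mul_twist (hab : a ≠ b) (hz : z ≠ 0) : twist a b z * twist a b z = 1 := by
  ext i j
  rw [twist_mul_apply, twist_apply, Equiv.swap_apply_self, Matrix.one_apply]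
  rcases eq_or_ne i j with rfl | h
  · simp [twistDiag_mul_swap hab hz]
  · simp [h, Ne.symm h]

theorem tmat_eq_twist {e : ℕ} (hn : 2 ≤ n) (k : ℤ) :
    tmat e n k = twist ⟨0, by omega⟩ ⟨1, by omega⟩ (zeta e ^ k) := by
  ext i j
  rw [twist_apply, tmat, Matrix.of_apply, twistDiag, _root_.zpow_neg]
  simp only [Equiv.swap_apply_def, Fin.ext_iff]
  split_ifs <;> (try dsimp only at *) <;> first | rfl | omega

theorem smat_eq_twist {p : ℕ} (hp : 1 ≤ p) (hpn : p + 2 ≤ n) :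
    smat n (p + 2) = twist ⟨p, by omega⟩ ⟨p + 1, by omega⟩ 1 := by
  ext i j
  rw [twist_apply, smat, Matrix.of_apply, twistDiag, inv_one]
  simp only [Equiv.swap_apply_def, Fin.ext_iff]
  split_ifs <;> (try dsimp only at *) <;> first | rfl | omega

theorem twist_mul_ne_zero_iff (hz : z ≠ 0) (i j : Fin n) :
    (twist a b z * w) i j ≠ 0 ↔ w (Equiv.swap a b i) j ≠ 0 := by
  rw [twist_mul_apply, mul_ne_zero_iff, and_iff_right (twistDiag_ne_zero hz i)]

theorem IsMonomial.twist_mul (hw : IsMonomial w) (hz : z ≠ 0) : IsMonomial (twist a b z * w) :=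
  hw.of_ne_zero_iff _ (twist_mul_ne_zero_iff hz)

theorem col_twist_mul (hw : IsMonomial w) (hz : z ≠ 0) (i : Fin n) :
    col (twist a b z * w) i = col w (Equiv.swap a b i) :=
  hw.col_of_ne_zero_iff _ (twist_mul_ne_zero_iff hz) i

theorem entry_twist_mul (hw : IsMonomial w) (hz : z ≠ 0) (i : Fin n) :
    entry (twist a b z * w) i = twistDiag a b z i * entry w (Equiv.swap a b i) := by
  rw [entry, col_twist_mul hw hz, twist_mul_apply, entry]

theorem prod_twistDiag (hab : a ≠ b) (hz : z ≠ 0) : ∏ i, twistDiag a b z i = 1 := by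
  rw [← Finset.prod_subset (Finset.subset_univ {a, b}), Finset.prod_pair hab]
  · simpa using twistDiag_mul_swap hab hz a
  · intro i _ hi
    simp only [Finset.mem_insert, Finset.mem_singleton, not_or] at hi
    simp [twistDiag, hi.1, hi.2]

theorem twistDiag_pow {e : ℕ} (hz : z ^ e = 1) (i : Fin n) : twistDiag a b z i ^ e = 1 := by
  unfold twistDiag
  split_ifs <;> simp [inv_pow, hz]

theorem _root_.IsGeen.twist_mul {e : ℕ} (hw : IsGeen e n w) (hab : a ≠ b) (hz : z ≠ 0)
    (hze : z ^ e = 1) : IsGeen e n (twist a b z * w) := by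
  have hm := hw.isMonomial.twist_mul (a := a) (b := b) hz
  refine ⟨hm.1, hm.2, fun i j hij => ?_, ?_⟩
  · rw [twist_mul_apply, mul_pow, twistDiag_pow hze, one_mul]
    exact hw.2.2.1 _ _ ((twist_mul_ne_zero_iff hz i j).1 hij)
  · rw [hm.prod_ite_ne_zero]
    simp only [entry_twist_mul hw.isMonomial hz, Finset.prod_mul_distrib, prod_twistDiag hab hz,
      one_mul]
    rw [Equiv.prod_comp (Equiv.swap a b) (entry w), hw.prod_entry]

end Twist

section LengthFormula

variable {n : ℕ} {a b i j : Fin n} {z : ℂ} {w : Matrix (Fin n) (Fin n) ℂ}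

noncomputable def pairLength (w : Matrix (Fin n) (Fin n) ℂ) (i j : Fin n) : ℕ :=
  if entry w j ≠ 1 then 1 + (if col w i < col w j then 1 else 0)
  else if col w j < col w i then 1 else 0

def pairs (n : ℕ) : Finset (Fin n × Fin n) := Finset.univ.filter fun q => q.1 < q.2

noncomputable def lengthFormula (w : Matrix (Fin n) (Fin n) ℂ) : ℕ :=
  ∑ q ∈ pairs n, pairLength w q.1 q.2

theorem mem_pairs {q : Fin n × Fin n} : q ∈ pairs n ↔ q.1 < q.2 := by
  simp [pairs]

theorem lengthFormula_one : lengthFormula (1 : Matrix (Fin n) (Fin n) ℂ) = 0 :=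
  Finset.sum_eq_zero fun q hq => by
    simp [pairLength, col_one, entry_one, (mem_pairs.1 hq).not_gt]

theorem swap_lt_swap (hab : (a : ℕ) + 1 = b) (hij : i < j) (hne : (i, j) ≠ (a, b)) :
    Equiv.swap a b i < Equiv.swap a b j := by
  simp only [Equiv.swap_apply_def]
  split_ifs <;> simp only [ne_eq, Prod.mk.injEq, Fin.ext_iff, Fin.lt_def] at * <;> omega

theorem twistDiag_eq_one_of_lt (hab : (a : ℕ) + 1 = b) (hz : z = 1 ∨ (a : ℕ) = 0) (hij : i < j)
    (hne : (i, j) ≠ (a, b)) : twistDiag a b z j = 1 := by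
  simp only [ne_eq, Prod.mk.injEq, Fin.ext_iff, Fin.lt_def] at hne hij
  rcases hz with rfl | ha
  · simp [twistDiag]
  · unfold twistDiag
    rw [if_neg (by rw [Fin.ext_iff]; omega), if_neg (by rw [Fin.ext_iff]; omega)]

theorem pairLength_twist_mul_of_ne (hw : IsMonomial w) (hab : (a : ℕ) + 1 = b) (hz₀ : z ≠ 0)
    (hz : z = 1 ∨ (a : ℕ) = 0) (hij : i < j) (hne : (i, j) ≠ (a, b)) :
    pairLength (twist a b z * w) i j = pairLength w (Equiv.swap a b i) (Equiv.swap a b j) := by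
  rw [pairLength, pairLength, entry_twist_mul hw hz₀, twistDiag_eq_one_of_lt hab hz hij hne,
    one_mul, col_twist_mul hw hz₀, col_twist_mul hw hz₀]

theorem pairLength_twist_mul (hw : IsMonomial w) (hab : a ≠ b) (hz₀ : z ≠ 0) :
    pairLength (twist a b z * w) a b =
      if z * entry w a ≠ 1 then 1 + (if col w b < col w a then 1 else 0)
      else if col w a < col w b then 1 else 0 := by
  rw [pairLength, entry_twist_mul hw hz₀, col_twist_mul hw hz₀, col_twist_mul hw hz₀,
    Equiv.swap_apply_left, Equiv.swap_apply_right]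
  simp [twistDiag, hab.symm]

theorem pairLength_twist_mul_eq_or (hw : IsMonomial w) (hab : a ≠ b) (hz₀ : z ≠ 0) :
    pairLength (twist a b z * w) a b = pairLength w a b + 1 ∨
      pairLength (twist a b z * w) a b + 1 = pairLength w a b := by
  have hcol : col w a ≠ col w b := hw.col_injective.ne hab
  rw [pairLength_twist_mul hw hab hz₀, pairLength]
  simp only [Fin.lt_def, ne_eq, Fin.ext_iff] at hcol ⊢
  split_ifs <;> omega

theorem lengthFormula_twist_mul (hw : IsMonomial w) (hab : (a : ℕ) + 1 = b) (hz₀ : z ≠ 0)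
    (hz : z = 1 ∨ (a : ℕ) = 0) :
    lengthFormula (twist a b z * w) + pairLength w a b =
      lengthFormula w + pairLength (twist a b z * w) a b := by
  have hmem : (a, b) ∈ pairs n := mem_pairs.2 (show a < b from Fin.lt_def.2 (by omega))
  set S := (pairs n).erase (a, b)
  let τ : Fin n × Fin n → Fin n × Fin n := fun q => (Equiv.swap a b q.1, Equiv.swap a b q.2)
  have hτ : ∀ q ∈ S, τ q ∈ S := by
    intro q hq
    obtain ⟨hne, hq⟩ := Finset.mem_erase.1 hq
    refine Finset.mem_erase.2 ⟨fun h => ?_, mem_pairs.2 (swap_lt_swap hab (mem_pairs.1 hq) hne)⟩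
    simp only [τ, Prod.mk.injEq, Equiv.swap_apply_eq_iff, Equiv.swap_apply_left,
      Equiv.swap_apply_right] at h
    have hba : b < a := h.1 ▸ h.2 ▸ mem_pairs.1 hq
    exact absurd hba (Fin.lt_def.2 (by omega)).asymm
  have hS : ∑ q ∈ S, pairLength (twist a b z * w) q.1 q.2 = ∑ q ∈ S, pairLength w q.1 q.2 := by
    refine Finset.sum_nbij' τ τ hτ hτ (fun q _ => by simp [τ]) (fun q _ => by simp [τ])
      fun q hq => ?_
    obtain ⟨hne, hq⟩ := Finset.mem_erase.1 hq
    exact pairLength_twist_mul_of_ne hw hab hz₀ hz (mem_pairs.1 hq) hne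
  rw [lengthFormula, lengthFormula, ← Finset.add_sum_erase _ _ hmem,
    ← Finset.add_sum_erase _ _ hmem, hS]
  ring

theorem lengthFormula_twist_mul_add_one_eq_iff (hw : IsMonomial w) (hab : (a : ℕ) + 1 = b)
    (hz₀ : z ≠ 0) (hz : z = 1 ∨ (a : ℕ) = 0) :
    lengthFormula (twist a b z * w) + 1 = lengthFormula w ↔
      pairLength (twist a b z * w) a b + 1 = pairLength w a b := by
  have := lengthFormula_twist_mul hw hab hz₀ hz
  omega

end LengthFormula

section Length

variable {e n : ℕ} {w : Matrix (Fin n) (Fin n) ℂ}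

theorem isPrimitiveRoot_zeta (he : e ≠ 0) : IsPrimitiveRoot (zeta e) e :=
  Complex.isPrimitiveRoot_exp e he

theorem zeta_zpow_ne_zero (e : ℕ) (k : ℤ) : zeta e ^ k ≠ 0 :=
  zpow_ne_zero _ (Complex.exp_ne_zero _)

theorem zeta_zpow_natCast_pow_self (e k : ℕ) : (zeta e ^ (k : ℤ)) ^ e = 1 := by
  rcases eq_or_ne e 0 with rfl | he
  · exact pow_zero _
  · rw [zpow_natCast, pow_right_comm, (isPrimitiveRoot_zeta he).pow_eq_one, one_pow]

theorem exists_twist_of_mem_Xset (hn : 2 ≤ n) {x : Matrix (Fin n) (Fin n) ℂ}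
    (hx : x ∈ Xset e n) : ∃ (a b : Fin n) (z : ℂ), (a : ℕ) + 1 = b ∧ z ≠ 0 ∧ z ^ e = 1 ∧
      (z = 1 ∨ (a : ℕ) = 0) ∧ x = twist a b z := by
  rcases hx with ⟨k, -, rfl⟩ | ⟨j, hj, hjn, rfl⟩
  · exact ⟨_, _, _, rfl, zeta_zpow_ne_zero e k, zeta_zpow_natCast_pow_self e k, Or.inr rfl,
      tmat_eq_twist hn k⟩
  · obtain ⟨p, rfl⟩ : ∃ p, j = p + 2 := ⟨j - 2, by omega⟩
    exact ⟨_, _, _, rfl, one_ne_zero, one_pow e, Or.inl rfl, smat_eq_twist (by omega) hjn⟩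

theorem entry_eq_one_and_col_lt_of_not_descent {a b : Fin n} {z : ℂ} (hw : IsMonomial w)
    (hab : (a : ℕ) + 1 = b) (hz₀ : z ≠ 0) (hz : z = 1 ∨ (a : ℕ) = 0) (hza : z * entry w a = 1)
    (hnd : lengthFormula (twist a b z * w) + 1 ≠ lengthFormula w) :
    entry w b = 1 ∧ col w a < col w b := by
  have hab' : a ≠ b := Fin.ne_of_val_ne (by omega)
  have hcol : ((col w a : Fin n) : ℕ) ≠ col w b := Fin.val_ne_of_ne (hw.col_injective.ne hab')
  rw [ne_eq, lengthFormula_twist_mul_add_one_eq_iff hw hab hz₀ hz, pairLength_twist_mul hw hab' hz₀,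
    if_neg (not_not.2 hza), pairLength] at hnd
  simp only [Fin.lt_def] at hnd ⊢
  by_cases hb : entry w b = 1
  · rw [if_neg (not_not.2 hb)] at hnd
    exact ⟨hb, by split_ifs at hnd <;> omega⟩
  · rw [if_pos hb] at hnd
    split_ifs at hnd <;> omega

theorem adjacent_sorted_of_forall_not_descent (he : 1 ≤ e) (hn : 2 ≤ n) (hw : IsGeen e n w)
    (hnd : ∀ x ∈ Xset e n, lengthFormula (x * w) + 1 ≠ lengthFormula w) (p : ℕ)
    (hp : p + 1 < n) : entry w ⟨p + 1, hp⟩ = 1 ∧ col w ⟨p, by omega⟩ < col w ⟨p + 1, hp⟩ := by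
  have hm := hw.isMonomial
  induction p with
  | zero =>
    have : NeZero e := ⟨by omega⟩
    have hroot : (entry w ⟨0, by omega⟩)⁻¹ ^ e = 1 := by rw [inv_pow, hw.entry_pow, inv_one]
    obtain ⟨k, hk, hzk⟩ := (isPrimitiveRoot_zeta (by omega)).eq_pow_of_pow_eq_one hroot
    have hd := hnd _ (Or.inl ⟨k, hk, rfl⟩)
    rw [tmat_eq_twist hn] at hd
    refine entry_eq_one_and_col_lt_of_not_descent hm rfl (zeta_zpow_ne_zero e k) (Or.inr rfl) ?_ hd
    rw [zpow_natCast, hzk, inv_mul_cancel₀ (hm.entry_ne_zero _)]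
  | succ q ih =>
    have hd := hnd _ (Or.inr ⟨q + 1 + 2, by omega, by omega, rfl⟩)
    rw [smat_eq_twist (by omega) (by omega)] at hd
    refine entry_eq_one_and_col_lt_of_not_descent hm rfl one_ne_zero (Or.inl rfl) ?_ hd
    rw [one_mul]
    exact (ih (by omega)).1

theorem eq_one_of_forall_not_descent (he : 1 ≤ e) (hn : 2 ≤ n) (hw : IsGeen e n w)
    (hnd : ∀ x ∈ Xset e n, lengthFormula (x * w) + 1 ≠ lengthFormula w) : w = 1 := by
  have hsorted := adjacent_sorted_of_forall_not_descent he hn hw hnd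
  have hpos (i : Fin n) (hi : (i : ℕ) ≠ 0) : entry w i = 1 := by
    obtain ⟨p, hp⟩ : ∃ p, (i : ℕ) = p + 1 := ⟨i - 1, by omega⟩
    simpa [← hp] using (hsorted p (hp ▸ i.2)).1
  have hentry (i : Fin n) : entry w i = 1 := by
    by_cases hi : (i : ℕ) = 0
    · rw [← hw.prod_entry, Finset.prod_eq_single i (fun j _ hj => hpos j ?_) (by simp)]
      exact fun h => hj (Fin.ext (h.trans hi.symm))
    · exact hpos i hi
  obtain ⟨m, rfl⟩ : ∃ m, n = m + 1 := ⟨n - 1, by omega⟩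
  exact hw.isMonomial.eq_one hentry
    (Fin.strictMono_iff_lt_succ.2 fun i => (hsorted i (Nat.succ_lt_succ i.2)).2)

theorem exists_word_length_eq (he : 1 ≤ e) (hn : 2 ≤ n) (hw : IsGeen e n w) :
    ∃ l : List (Matrix (Fin n) (Fin n) ℂ),
      (∀ x ∈ l, x ∈ Xset e n) ∧ l.length = lengthFormula w ∧ l.prod = w := by
  induction h : lengthFormula w generalizing w with
  | zero =>
    exact ⟨[], by simp, rfl, (eq_one_of_forall_not_descent he hn hw fun _ _ => by omega).symm⟩
  | succ m ih =>
    obtain ⟨x, hx, hd⟩ : ∃ x ∈ Xset e n, lengthFormula (x * w) + 1 = lengthFormula w := by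
      by_contra! hnd
      rw [eq_one_of_forall_not_descent he hn hw hnd, lengthFormula_one] at h
      omega
    obtain ⟨a, b, z, hab, hz₀, hze, -, rfl⟩ := exists_twist_of_mem_Xset hn hx
    have hab' : a ≠ b := Fin.ne_of_val_ne (by omega)
    obtain ⟨l, hl, hlen, hprod⟩ := ih (hw.twist_mul hab' hz₀ hze) (by omega)
    refine ⟨twist a b z :: l, ?_, by simp [hlen], ?_⟩
    · exact fun y hy => (List.mem_cons.1 hy).elim (· ▸ hx) (hl y)
    · rw [List.prod_cons, hprod, ← Matrix.mul_assoc, twist_mul_twist hab' hz₀, Matrix.one_mul]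

theorem lengthFormula_list_prod_le (hn : 2 ≤ n) (l : List (Matrix (Fin n) (Fin n) ℂ))
    (hl : ∀ x ∈ l, x ∈ Xset e n) : IsMonomial l.prod ∧ lengthFormula l.prod ≤ l.length := by
  induction l with
  | nil => exact ⟨isMonomial_one, lengthFormula_one.le⟩
  | cons x l ih =>
    obtain ⟨hm, hle⟩ := ih fun y hy => hl y (List.mem_cons_of_mem x hy)
    obtain ⟨a, b, z, hab, hz₀, -, hz, rfl⟩ :=
      exists_twist_of_mem_Xset hn (hl x List.mem_cons_self)
    have hab' : a ≠ b := Fin.ne_of_val_ne (by omega)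
    refine ⟨hm.twist_mul hz₀, ?_⟩
    have := lengthFormula_twist_mul hm hab hz₀ hz
    rw [List.prod_cons, List.length_cons]
    rcases pairLength_twist_mul_eq_or hm hab' hz₀ with h | h <;> omega

theorem len_eq_lengthFormula (he : 1 ≤ e) (hn : 2 ≤ n) (hw : IsGeen e n w) :
    len e n w = lengthFormula w := by
  obtain ⟨l, hl, hlen, hprod⟩ := exists_word_length_eq he hn hw
  refine le_antisymm (hlen ▸ Nat.sInf_le ⟨l, hl, rfl, hprod⟩) (le_csInf ⟨_, l, hl, rfl, hprod⟩ ?_)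
  rintro r ⟨l', hl', rfl, rfl⟩
  exact (lengthFormula_list_prod_le hn l' hl').2

end Length

end Geen

open Geen

/-- length behaviour of left multiplication by `t_k`, in terms of the
nonzero entries `a_1 = w[1,c_1]`, `a_2 = w[2,c_2]` of the first two rows. -/
theorem statement_9 (e n : ℕ) (he : 1 ≤ e) (hn : 2 ≤ n)
    (w : Matrix (Fin n) (Fin n) ℂ) (hw : IsGeen e n w)
    (c₁ c₂ : Fin n)
    (h1 : w ⟨0, by omega⟩ c₁ ≠ 0) (h2 : w ⟨1, by omega⟩ c₂ ≠ 0) :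
    (c₁ < c₂ → ∀ k : ℕ, k < e →
      (len e n (tmat e n k * w) + 1 = len e n w ↔ w ⟨1, by omega⟩ c₂ ≠ 1)) ∧
    (c₂ < c₁ → ∀ k : ℕ, k < e →
      (len e n (tmat e n k * w) + 1 = len e n w ↔
        w ⟨0, by omega⟩ c₁ = zeta e ^ (-(k : ℤ)))) := by
  set r₀ : Fin n := ⟨0, by omega⟩
  set r₁ : Fin n := ⟨1, by omega⟩
  have hr : r₀ ≠ r₁ := Fin.ne_of_val_ne zero_ne_one
  have hm := hw.isMonomial
  have hdesc (k : ℕ) : len e n (tmat e n k * w) + 1 = len e n w ↔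
      pairLength (twist r₀ r₁ (zeta e ^ (k : ℤ)) * w) r₀ r₁ + 1 = pairLength w r₀ r₁ := by
    rw [tmat_eq_twist hn, len_eq_lengthFormula he hn hw, len_eq_lengthFormula he hn
      (hw.twist_mul hr (zeta_zpow_ne_zero e k) (zeta_zpow_natCast_pow_self e k))]
    exact lengthFormula_twist_mul_add_one_eq_iff hm rfl (zeta_zpow_ne_zero e k) (Or.inr rfl)
  refine ⟨fun hlt k _ => ?_, fun hlt k _ => ?_⟩ <;>
    rw [hdesc, pairLength_twist_mul hm hr (zeta_zpow_ne_zero e k), pairLength, entry, entry,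
      hm.col_eq h1, hm.col_eq h2]
  · by_cases h : w r₁ c₂ = 1 <;> simp [h, hlt, hlt.not_gt]
  · have hinv : zeta e ^ (k : ℤ) * w r₀ c₁ = 1 ↔ w r₀ c₁ = zeta e ^ (-(k : ℤ)) := by
      rw [mul_comm, mul_eq_one_iff_eq_inv₀ (zeta_zpow_ne_zero e k), _root_.zpow_neg]
    simp only [ne_eq, hinv]
    by_cases h : w r₀ c₁ = zeta e ^ (-(k : ℤ)) <;> simp [h, hlt, hlt.not_gt]
end
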